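/- Let δ ≥ 0, T > 0, λ a finite measure on [0, δ], B : [0, T+δ] × [0, δ] → ℝ^{n×n} bounded measurable, Y : [0, T+δ] → ℝⁿ integrable with Y = 0 on (T, T+δ], and χ : [-δ, T] → ℝⁿ integrable with χ = 0 on [-δ, 0]. Then ∫₀^δ ∫₀^T ⟨ B(t,r)ᵀ ∫ₜ^T Y(s) ds, χ(t - r) ⟩ dt λ(dr) = ∫₀^T ⟨ ∫ₜ^T ∫₀^δ B(t+r, r)ᵀ Y(s + r) λ(dr) ds, χ(t) ⟩ dt. -/
import Mathlib


open MeasureTheory Set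

private lemma shift_eq_aux (f : ℝ → ℝ) (r t c : ℝ) (h : t ≤ c) :
    ∫ s in Ioc t c, f (s + r) = ∫ s in Ioc (t + r) (c + r), f s := by
  rw [← intervalIntegral.integral_of_le h,
    ← intervalIntegral.integral_of_le (by linarith : t + r ≤ c + r)]
  exact intervalIntegral.integral_comp_add_right f r

private lemma shift_int_aux {f : ℝ → ℝ} {a b : ℝ} (hf : IntegrableOn f (Icc a b)) {r t c : ℝ}
    (h1 : a ≤ t + r) (h2 : c + r ≤ b) (h3 : t ≤ c) :
    IntegrableOn (fun s => f (s + r)) (Ioc t c) := by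
  have h4 : t + r ≤ c + r := by linarith
  have h5 : IntervalIntegrable f volume (t + r) (c + r) := by
    rw [intervalIntegrable_iff, uIoc_of_le h4]
    exact hf.mono_set (Ioc_subset_Icc_self.trans (Icc_subset_Icc h1 h2))
  have h6 := h5.comp_add_right r
  rw [intervalIntegrable_iff, uIoc_of_le (by linarith : t + r - r ≤ c + r - r)] at h6
  have e1 : t + r - r = t := by ring
  have e2 : c + r - r = c := by ring
  rwa [e1, e2] at h6

/-- Identity (3.5):
`∫₀^δ ∫₀^T ⟨B(t,r)ᵀ ∫ₜ^T Y(s) ds, χ(t-r)⟩ dt lam(dr)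
  = ∫₀^T ⟨∫ₜ^T ∫₀^δ B(t+r,r)ᵀ Y(s+r) lam(dr) ds, χ(t)⟩ dt`,
where `Y` vanishes on `(T, T+δ]` and `χ` vanishes on `[-δ, 0]`. -/
theorem stmt_4 (n : ℕ) (δ T : ℝ) (hδ : 0 ≤ δ) (hT : 0 < T)
    (lam : Measure ℝ) [IsFiniteMeasure lam] (hlam : lam (Set.Icc 0 δ)ᶜ = 0)
    (B : ℝ → ℝ → Fin n → Fin n → ℝ)
    (hBmeas : Measurable (Function.uncurry B))
    (hBbdd : ∃ C, ∀ t r i j, |B t r i j| ≤ C)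
    (Y : ℝ → Fin n → ℝ) (hYmeas : Measurable Y)
    (hYint : IntegrableOn Y (Icc 0 (T + δ)))
    (hY0 : ∀ t ∈ Ioc T (T + δ), Y t = 0)
    (χ : ℝ → Fin n → ℝ) (hχmeas : Measurable χ)
    (hχint : IntegrableOn χ (Icc (-δ) T))
    (hχ0 : ∀ t ∈ Icc (-δ) (0:ℝ), χ t = 0) :
    ∫ r in Icc (0:ℝ) δ, (∫ t in Ioc (0:ℝ) T,
        ∑ i, (∑ k, B t r k i * (∫ s in Ioc t T, Y s k)) * χ (t - r) i) ∂lam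
      = ∫ t in Ioc (0:ℝ) T,
          ∑ i, (∫ s in Ioc t T, ∫ r in Icc (0:ℝ) δ,
            (∑ k, B (t + r) r k i * Y (s + r) k) ∂lam) * χ t i := by
  classical
  obtain ⟨C0, hC0⟩ := hBbdd
  set C : ℝ := max C0 0 with hCdef
  have hC : ∀ t r i j, |B t r i j| ≤ C := fun t r i j => (hC0 t r i j).trans (le_max_left _ _)
  have hCpos : (0:ℝ) ≤ C := le_max_right _ _
  -- component measurability
  have hYk : ∀ k, Measurable fun s => Y s k := fun k => (measurable_pi_apply k).comp hYmeas
  have hχk : ∀ i, Measurable fun t => χ t i := fun i => (measurable_pi_apply i).comp hχmeas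
  have hBk : ∀ k i, Measurable fun p : ℝ × ℝ => B p.1 p.2 k i := fun k i =>
    (measurable_pi_apply i).comp ((measurable_pi_apply k).comp hBmeas)
  -- component integrability
  have hYkInt : ∀ k, IntegrableOn (fun s => Y s k) (Icc 0 (T + δ)) := fun k =>
    hYint.norm.mono' ((hYk k).aestronglyMeasurable)
      (Filter.Eventually.of_forall fun s => norm_le_pi_norm (Y s) k)
  have hχkInt : ∀ i, IntegrableOn (fun t => χ t i) (Icc (-δ) T) := fun i =>
    hχint.norm.mono' ((hχk i).aestronglyMeasurable)
      (Filter.Eventually.of_forall fun t => norm_le_pi_norm (χ t) i)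
  set ψ : ℝ → ℝ := fun s => ∑ k, |Y s k| with hψ
  set φ : ℝ → ℝ := fun t => ∑ i, |χ t i| with hφ
  have hψm : Measurable ψ := Finset.measurable_sum _ fun k _ => (hYk k).abs
  have hψ0 : ∀ s, 0 ≤ ψ s := fun s => Finset.sum_nonneg fun k _ => abs_nonneg _
  have hφ0 : ∀ t, 0 ≤ φ t := fun t => Finset.sum_nonneg fun i _ => abs_nonneg _
  have hψInt : IntegrableOn ψ (Icc 0 (T + δ)) :=
    integrable_finset_sum _ fun k _ => (hYkInt k).abs
  have hφInt : IntegrableOn φ (Icc (-δ) T) :=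
    integrable_finset_sum _ fun i _ => (hχkInt i).abs
  have hφν : IntegrableOn φ (Ioc (0:ℝ) T) :=
    hφInt.mono_set (fun x hx => ⟨by linarith [hx.1], hx.2⟩)
  set M : ℝ := ∫ s in Icc 0 (T + δ), ψ s with hM
  have hshiftle : ∀ r ∈ Icc (0:ℝ) δ, (∫ s in Ioc (0:ℝ) T, ψ (s + r)) ≤ M := by
    intro r hr
    rw [shift_eq_aux ψ r 0 T hT.le]
    have e1 : (0:ℝ) + r = r := by ring
    rw [e1]
    refine setIntegral_mono_set hψInt (Filter.Eventually.of_forall fun s => hψ0 s) ?_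
    refine HasSubset.Subset.eventuallyLE ?_
    intro x hx
    exact ⟨by linarith [hx.1, hr.1], by linarith [hx.2, hr.2]⟩
  -- the key bound on the summed integrand
  have hsum_b : ∀ (a r s : ℝ) (i : Fin n), |∑ k, B a r k i * Y s k| ≤ C * ψ s := by
    intro a r s i
    calc |∑ k, B a r k i * Y s k| ≤ ∑ k, |B a r k i * Y s k| :=
          Finset.abs_sum_le_sum_abs _ _
      _ ≤ ∑ k, C * |Y s k| := by
          refine Finset.sum_le_sum fun k _ => ?_
          rw [abs_mul]
          exact mul_le_mul_of_nonneg_right (hC _ _ _ _) (abs_nonneg _)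
      _ = C * ψ s := by simp only [hψ]; rw [← Finset.mul_sum]
  set I : ℝ → ℝ → ℝ → ℝ := fun r t s =>
    if t < s then ∑ i, (∑ k, B (t + r) r k i * Y (s + r) k) * χ t i else 0 with hI
  have hIb : ∀ r t s, |I r t s| ≤ C * ψ (s + r) * φ t := by
    intro r t s
    simp only [hI]
    by_cases h : t < s
    · rw [if_pos h]
      calc |∑ i, (∑ k, B (t + r) r k i * Y (s + r) k) * χ t i|
          ≤ ∑ i, |(∑ k, B (t + r) r k i * Y (s + r) k) * χ t i| :=
            Finset.abs_sum_le_sum_abs _ _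
        _ ≤ ∑ i, (C * ψ (s + r)) * |χ t i| := by
            refine Finset.sum_le_sum fun i _ => ?_
            rw [abs_mul]
            exact mul_le_mul_of_nonneg_right (hsum_b _ _ _ i) (abs_nonneg _)
        _ = C * ψ (s + r) * φ t := by simp only [hφ]; rw [← Finset.mul_sum]
    · rw [if_neg h]
      simpa using mul_nonneg (mul_nonneg hCpos (hψ0 _)) (hφ0 _)
  have hImeas : Measurable fun q : (ℝ × ℝ) × ℝ => I q.1.1 q.1.2 q.2 := by
    simp only [hI]
    refine Measurable.ite (measurableSet_lt measurable_fst.snd measurable_snd) ?_ measurable_const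
    refine Finset.measurable_sum _ fun i _ => Measurable.mul ?_ ?_
    · refine Finset.measurable_sum _ fun k _ => Measurable.mul ?_ ?_
      · exact (hBk k i).comp ((measurable_fst.snd.add measurable_fst.fst).prodMk
          measurable_fst.fst)
      · exact (hYk k).comp (measurable_snd.add measurable_fst.fst)
    · exact (hχk i).comp measurable_fst.snd
  have hIocInter : ∀ t ∈ Ioc (0:ℝ) T, Ioi t ∩ Ioc (0:ℝ) T = Ioc t T := by
    intro t ht
    ext x
    simp only [mem_inter_iff, mem_Ioi, mem_Ioc]
    constructor
    · rintro ⟨h1, _, h3⟩; exact ⟨h1, h3⟩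
    · rintro ⟨h1, h2⟩; exact ⟨h1, lt_trans ht.1 h1, h2⟩
  -- Step 1: rewrite the inner integral for each fixed r ∈ [0, δ]
  have step1 : ∀ r ∈ Icc (0:ℝ) δ,
      (∫ t in Ioc (0:ℝ) T,
          ∑ i, (∑ k, B t r k i * (∫ s in Ioc t T, Y s k)) * χ (t - r) i)
        = ∫ t in Ioc (0:ℝ) T, ∫ s in Ioc (0:ℝ) T, I r t s := by
    intro r hr
    obtain ⟨hr0, hrδ⟩ := hr
    set F : ℝ → ℝ := fun t =>
      ∑ i, (∑ k, B (t + r) r k i * (∫ s in Ioc (t + r) T, Y s k)) * χ t i with hF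
    have hA : (∫ t in Ioc (0:ℝ) T,
        ∑ i, (∑ k, B t r k i * (∫ s in Ioc t T, Y s k)) * χ (t - r) i)
        = ∫ t in Ioc (-r) (T - r), F t := by
      have h1 := intervalIntegral.integral_comp_add_right (a := -r) (b := T - r)
        (fun t => ∑ i, (∑ k, B t r k i * (∫ s in Ioc t T, Y s k)) * χ (t - r) i) r
      have e1 : -r + r = 0 := by ring
      have e2 : T - r + r = T := by ring
      rw [e1, e2] at h1
      rw [← intervalIntegral.integral_of_le hT.le, ← h1,
        intervalIntegral.integral_of_le (by linarith : -r ≤ T - r)]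
      refine setIntegral_congr_fun measurableSet_Ioc fun t ht => ?_
      have e3 : t + r - r = t := by ring
      simp only [e3, hF]
    have hvan1 : ∫ t in Ioc (-r) (T - r), F t = ∫ t in Ioc (0:ℝ) (T - r), F t := by
      have hcong : ∀ t ∈ Ioc (-r) (T - r), F t = (Ioc (0:ℝ) (T - r)).indicator F t := by
        intro t ht
        by_cases h : t ∈ Ioc (0:ℝ) (T - r)
        · rw [indicator_of_mem h]
        · have ht0 : t ≤ 0 := by
            by_contra h'
            exact h ⟨lt_of_not_ge h', ht.2⟩
          have hχt : χ t = 0 := hχ0 t ⟨by linarith [ht.1], ht0⟩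
          rw [indicator_of_notMem h]
          simp [hF, hχt]
      rw [setIntegral_congr_fun measurableSet_Ioc hcong,
        integral_indicator measurableSet_Ioc, Measure.restrict_restrict measurableSet_Ioc,
        inter_eq_left.mpr (Ioc_subset_Ioc_left (by linarith))]
    have hvan2 : ∫ t in Ioc (0:ℝ) T, F t = ∫ t in Ioc (0:ℝ) (T - r), F t := by
      have hcong : ∀ t ∈ Ioc (0:ℝ) T, F t = (Ioc (0:ℝ) (T - r)).indicator F t := by
        intro t ht
        by_cases h : t ∈ Ioc (0:ℝ) (T - r)
        · rw [indicator_of_mem h]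
        · have htr : ¬ (t + r < T) := by
            rcases lt_or_ge (T - r) t with h' | h'
            · intro hc; linarith
            · exact absurd ⟨ht.1, h'⟩ h
          rw [indicator_of_notMem h]
          simp [hF, Ioc_eq_empty htr]
      rw [setIntegral_congr_fun measurableSet_Ioc hcong,
        integral_indicator measurableSet_Ioc, Measure.restrict_restrict measurableSet_Ioc,
        inter_eq_left.mpr (Ioc_subset_Ioc_right (by linarith))]
    have hD : ∀ t ∈ Ioc (0:ℝ) T, F t = ∫ s in Ioc (0:ℝ) T, I r t s := by
      intro t ht
      have hD1 : ∀ k : Fin n,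
          (∫ s in Ioc (t + r) T, Y s k) = ∫ s in Ioc t T, Y (s + r) k := by
        intro k
        rw [shift_eq_aux (fun s => Y s k) r t T ht.2]
        have hset : Iic T ∩ Ioc (t + r) (T + r) = Ioc (t + r) T := by
          ext x
          simp only [mem_inter_iff, mem_Iic, mem_Ioc]
          constructor
          · rintro ⟨h1, h2, _⟩; exact ⟨h2, h1⟩
          · rintro ⟨h1, h2⟩; exact ⟨h2, h1, by linarith⟩
        have hcong : ∀ s ∈ Ioc (t + r) (T + r),
            Y s k = (Iic T).indicator (fun s => Y s k) s := by
          intro s hs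
          by_cases h : s ≤ T
          · rw [indicator_of_mem (mem_Iic.mpr h)]
          · have hY : Y s = 0 := hY0 s ⟨lt_of_not_ge h, by linarith [hs.2]⟩
            rw [indicator_of_notMem (by simpa [mem_Iic] using h)]
            simp [hY]
        rw [show (∫ s in Ioc (t + r) (T + r), Y s k)
            = ∫ s in Ioc (t + r) (T + r), (Iic T).indicator (fun s => Y s k) s from
            setIntegral_congr_fun measurableSet_Ioc hcong,
          integral_indicator measurableSet_Iic,
          Measure.restrict_restrict measurableSet_Iic, hset]
      have hYsInt : ∀ k : Fin n, IntegrableOn (fun s => Y (s + r) k) (Ioc t T) :=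
        fun k => shift_int_aux (hYkInt k) (by linarith [ht.1]) (by linarith) ht.2
      have hD3 : (∫ s in Ioc t T, ∑ i, (∑ k, B (t + r) r k i * Y (s + r) k) * χ t i)
          = ∑ i, (∑ k, B (t + r) r k i * (∫ s in Ioc t T, Y (s + r) k)) * χ t i := by
        rw [integral_finset_sum Finset.univ (fun i _ =>
          ((integrable_finset_sum _ fun k _ => (hYsInt k).const_mul _).mul_const _))]
        refine Finset.sum_congr rfl fun i _ => ?_
        rw [integral_mul_const, integral_finset_sum Finset.univ
          (fun k _ => (hYsInt k).const_mul _)]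
        congr 1
        exact Finset.sum_congr rfl fun k _ => integral_const_mul _ _
      have hD4 : (∫ s in Ioc (0:ℝ) T, I r t s)
          = ∫ s in Ioc t T, ∑ i, (∑ k, B (t + r) r k i * Y (s + r) k) * χ t i := by
        have hind : ∀ s, I r t s = (Ioi t).indicator
            (fun s => ∑ i, (∑ k, B (t + r) r k i * Y (s + r) k) * χ t i) s := by
          intro s
          simp only [hI]
          by_cases h : t < s
          · rw [if_pos h, indicator_of_mem (mem_Ioi.mpr h)]
          · rw [if_neg h, indicator_of_notMem (by simpa [mem_Ioi] using h)]
        simp only [hind]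
        rw [integral_indicator measurableSet_Ioi,
          Measure.restrict_restrict measurableSet_Ioi, hIocInter t ht]
      simp only [hF]
      simp only [hD1]
      rw [← hD3, hD4]
    rw [hA, hvan1, ← hvan2]
    exact setIntegral_congr_fun measurableSet_Ioc hD
  -- product integrability of the shifted ψ
  have hmψ : Measurable fun p : ℝ × ℝ => ψ (p.2 + p.1) :=
    hψm.comp (measurable_snd.add measurable_fst)
  have hprod : Integrable (fun p : ℝ × ℝ => ψ (p.2 + p.1))
      ((lam.restrict (Icc (0:ℝ) δ)).prod (volume.restrict (Ioc (0:ℝ) T))) := by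
    rw [integrable_prod_iff hmψ.aestronglyMeasurable]
    refine ⟨?_, ?_⟩
    · filter_upwards [ae_restrict_mem measurableSet_Icc] with r hr
      exact shift_int_aux hψInt (by linarith [hr.1]) (by linarith [hr.2]) hT.le
    · refine Integrable.mono' (integrable_const M) ?_ ?_
      · exact (hmψ.norm.stronglyMeasurable.integral_prod_right').aestronglyMeasurable
      · filter_upwards [ae_restrict_mem measurableSet_Icc] with r hr
        have h1 : (∫ s in Ioc (0:ℝ) T, ‖ψ (s + r)‖) = ∫ s in Ioc (0:ℝ) T, ψ (s + r) := by
          refine integral_congr_ae (Filter.Eventually.of_forall fun s => ?_)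
          show ‖ψ (s + r)‖ = ψ (s + r)
          rw [Real.norm_eq_abs, abs_of_nonneg (hψ0 _)]
        calc ‖∫ s in Ioc (0:ℝ) T, ‖ψ (s + r)‖‖
            = |∫ s in Ioc (0:ℝ) T, ψ (s + r)| := by rw [h1, Real.norm_eq_abs]
          _ = ∫ s in Ioc (0:ℝ) T, ψ (s + r) := abs_of_nonneg (integral_nonneg fun s => hψ0 _)
          _ ≤ M := hshiftle r hr
  have haeprod : ∀ᵐ p ∂((lam.restrict (Icc (0:ℝ) δ)).prod (volume.restrict (Ioc (0:ℝ) T))),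
      p ∈ (Icc (0:ℝ) δ) ×ˢ (Ioc (0:ℝ) T) := by
    rw [Measure.prod_restrict]
    exact ae_restrict_mem (measurableSet_Icc.prod measurableSet_Ioc)
  -- Fubini 1
  have hIint1 : Integrable (fun p : ℝ × ℝ => ∫ s in Ioc (0:ℝ) T, I p.1 p.2 s)
      ((lam.restrict (Icc (0:ℝ) δ)).prod (volume.restrict (Ioc (0:ℝ) T))) := by
    refine Integrable.mono' ((integrable_const (C * M)).mul_prod hφν) ?_ ?_
    · exact (hImeas.stronglyMeasurable.integral_prod_right').aestronglyMeasurable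
    · filter_upwards [haeprod] with p hp
      have hslice : IntegrableOn (fun s => ψ (s + p.1)) (Ioc (0:ℝ) T) :=
        shift_int_aux hψInt (by linarith [hp.1.1]) (by linarith [hp.1.2]) hT.le
      calc ‖∫ s in Ioc (0:ℝ) T, I p.1 p.2 s‖
          ≤ ∫ s in Ioc (0:ℝ) T, C * ψ (s + p.1) * φ p.2 :=
            norm_integral_le_of_norm_le ((hslice.const_mul C).mul_const _)
              (Filter.Eventually.of_forall fun s => by
                rw [Real.norm_eq_abs]; exact hIb _ _ _)
        _ = C * (∫ s in Ioc (0:ℝ) T, ψ (s + p.1)) * φ p.2 := by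
            rw [integral_mul_const, integral_const_mul]
        _ ≤ C * M * φ p.2 := by
            exact mul_le_mul_of_nonneg_right
              (mul_le_mul_of_nonneg_left (hshiftle p.1 hp.1) hCpos) (hφ0 _)
  -- Fubini 2 (for each fixed t)
  have hIint2 : ∀ t : ℝ, Integrable (fun p : ℝ × ℝ => I p.1 t p.2)
      ((lam.restrict (Icc (0:ℝ) δ)).prod (volume.restrict (Ioc (0:ℝ) T))) := by
    intro t
    refine Integrable.mono' (hprod.const_mul (C * φ t)) ?_
      (Filter.Eventually.of_forall fun p => ?_)
    · exact (hImeas.comp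
        ((measurable_fst.prodMk measurable_const).prodMk measurable_snd)).aestronglyMeasurable
    · rw [Real.norm_eq_abs]
      calc |I p.1 t p.2| ≤ C * ψ (p.2 + p.1) * φ t := hIb _ _ _
        _ = C * φ t * ψ (p.2 + p.1) := by ring
  -- Step 4: identify the t-sliced double integral with the RHS integrand
  have step4 : ∀ t ∈ Ioc (0:ℝ) T,
      (∫ s in Ioc (0:ℝ) T, ∫ r in Icc (0:ℝ) δ, I r t s ∂lam)
        = ∑ i, (∫ s in Ioc t T, ∫ r in Icc (0:ℝ) δ,
            (∑ k, B (t + r) r k i * Y (s + r) k) ∂lam) * χ t i := by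
    intro t ht
    have h4a : ∀ s, (∫ r in Icc (0:ℝ) δ, I r t s ∂lam)
        = (Ioi t).indicator (fun s => ∫ r in Icc (0:ℝ) δ,
            (∑ i, (∑ k, B (t + r) r k i * Y (s + r) k) * χ t i) ∂lam) s := by
      intro s
      by_cases h : t < s
      · simp only [hI, if_pos h, indicator_of_mem (mem_Ioi.mpr h)]
      · simp only [hI, if_neg h, indicator_of_notMem (show s ∉ Ioi t by simpa [mem_Ioi] using h),
          integral_zero]
    simp only [h4a]
    rw [integral_indicator measurableSet_Ioi,
      Measure.restrict_restrict measurableSet_Ioi, hIocInter t ht]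
    have hae : ∀ᵐ s ∂(volume.restrict (Ioc t T)),
        Integrable (fun r => ψ (s + r)) (lam.restrict (Icc (0:ℝ) δ)) :=
      ae_restrict_of_ae_restrict_of_subset (Ioc_subset_Ioc_left ht.1.le) hprod.prod_left_ae
    have hcong : ∀ᵐ s ∂(volume.restrict (Ioc t T)),
        (∫ r in Icc (0:ℝ) δ, (∑ i, (∑ k, B (t + r) r k i * Y (s + r) k) * χ t i) ∂lam)
          = ∑ i, (∫ r in Icc (0:ℝ) δ, (∑ k, B (t + r) r k i * Y (s + r) k) ∂lam) * χ t i := by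
      filter_upwards [hae] with s hs
      have hik : ∀ (k i : Fin n),
          Integrable (fun r => B (t + r) r k i * Y (s + r) k) (lam.restrict (Icc (0:ℝ) δ)) := by
        intro k i
        refine Integrable.mono' (hs.const_mul C) ?_ (Filter.Eventually.of_forall fun r => ?_)
        · exact (((hBk k i).comp ((measurable_const.add measurable_id).prodMk
            measurable_id)).mul ((hYk k).comp (measurable_const.add measurable_id))).aestronglyMeasurable
        · rw [Real.norm_eq_abs, abs_mul]
          calc |B (t + r) r k i| * |Y (s + r) k|
              ≤ C * |Y (s + r) k| :=
                mul_le_mul_of_nonneg_right (hC _ _ _ _) (abs_nonneg _)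
            _ ≤ C * ψ (s + r) := by
                refine mul_le_mul_of_nonneg_left ?_ hCpos
                simp only [hψ]
                exact Finset.single_le_sum (f := fun j => |Y (s + r) j|)
                  (fun j _ => abs_nonneg _) (Finset.mem_univ k)
      rw [integral_finset_sum Finset.univ (fun i _ =>
        ((integrable_finset_sum _ fun k _ => hik k i).mul_const _))]
      exact Finset.sum_congr rfl fun i _ => integral_mul_const _ _
    rw [integral_congr_ae hcong]
    have hgInt : ∀ i : Fin n, IntegrableOn
        (fun s => ∫ r in Icc (0:ℝ) δ, (∑ k, B (t + r) r k i * Y (s + r) k) ∂lam)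
        (Ioc t T) := by
      intro i
      have hfi : Integrable
          (fun p : ℝ × ℝ => if t < p.2 then (∑ k, B (t + p.1) p.1 k i * Y (p.2 + p.1) k) else 0)
          ((lam.restrict (Icc (0:ℝ) δ)).prod (volume.restrict (Ioc (0:ℝ) T))) := by
        refine Integrable.mono' (hprod.const_mul C) ?_
          (Filter.Eventually.of_forall fun p => ?_)
        · refine (Measurable.ite (measurableSet_lt measurable_const measurable_snd) ?_
            measurable_const).aestronglyMeasurable
          refine Finset.measurable_sum _ fun k _ => Measurable.mul ?_ ?_
          · exact (hBk k i).comp ((measurable_const.add measurable_fst).prodMk measurable_fst)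
          · exact (hYk k).comp (measurable_snd.add measurable_fst)
        · rw [Real.norm_eq_abs]
          by_cases h : t < p.2
          · rw [if_pos h]
            exact hsum_b _ _ _ i
          · rw [if_neg h]
            simpa using mul_nonneg hCpos (hψ0 _)
      have h2 := hfi.integral_prod_right
      have h3 : (fun s => ∫ r in Icc (0:ℝ) δ,
            (if t < s then (∑ k, B (t + r) r k i * Y (s + r) k) else 0) ∂lam)
          = (Ioi t).indicator
            (fun s => ∫ r in Icc (0:ℝ) δ, (∑ k, B (t + r) r k i * Y (s + r) k) ∂lam) := by
        funext s
        by_cases h : t < s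
        · simp only [if_pos h, indicator_of_mem (mem_Ioi.mpr h)]
        · simp only [if_neg h, indicator_of_notMem (show s ∉ Ioi t by simpa [mem_Ioi] using h),
            integral_zero]
      rw [h3] at h2
      rw [integrable_indicator_iff measurableSet_Ioi] at h2
      rwa [IntegrableOn, Measure.restrict_restrict measurableSet_Ioi, hIocInter t ht] at h2
    rw [integral_finset_sum Finset.univ (fun i _ => (hgInt i).mul_const _)]
    exact Finset.sum_congr rfl fun i _ => integral_mul_const _ _
  -- assemble
  calc (∫ r in Icc (0:ℝ) δ, (∫ t in Ioc (0:ℝ) T,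
        ∑ i, (∑ k, B t r k i * (∫ s in Ioc t T, Y s k)) * χ (t - r) i) ∂lam)
      = ∫ r in Icc (0:ℝ) δ, (∫ t in Ioc (0:ℝ) T, ∫ s in Ioc (0:ℝ) T, I r t s) ∂lam := by
        refine integral_congr_ae ?_
        filter_upwards [ae_restrict_mem measurableSet_Icc] with r hr
        exact step1 r hr
    _ = ∫ t in Ioc (0:ℝ) T, ∫ r in Icc (0:ℝ) δ, (∫ s in Ioc (0:ℝ) T, I r t s) ∂lam :=
        integral_integral_swap (f := fun r t => ∫ s in Ioc (0:ℝ) T, I r t s) hIint1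
    _ = ∫ t in Ioc (0:ℝ) T, ∫ s in Ioc (0:ℝ) T, (∫ r in Icc (0:ℝ) δ, I r t s ∂lam) := by
        refine integral_congr_ae (Filter.Eventually.of_forall fun t => ?_)
        exact integral_integral_swap (f := fun r s => I r t s) (hIint2 t)
    _ = ∫ t in Ioc (0:ℝ) T, ∑ i, (∫ s in Ioc t T, ∫ r in Icc (0:ℝ) δ,
          (∑ k, B (t + r) r k i * Y (s + r) k) ∂lam) * χ t i := by
        refine integral_congr_ae ?_
        filter_upwards [ae_restrict_mem measurableSet_Ioc] with t ht
        exact step4 t ht
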